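/- Fix k ≥ 1 and n ≥ 1. The function P_n(θ) = |sin^{2k}(θ) · sin^{2k+1}(2kθ) · sin^{2k+1}((2k)²θ) ··· sin^{2k+1}((2k)^{n-1}θ) · sin((2k)ⁿθ)| attains its maximum over θ ∈ ℝ at θ = πk/(2k+1). -/

import Mathlib

/-! Let θ₀ = πk/(2k+1) and s = sin θ₀. With φ = (2k)ⁿθ one has
P_{n+1}(θ) = P_n(θ) · |sin^{2k} φ · sin 2kφ|, so P_n ≤ s^{(2k+1)n} follows by induction from the
one-step bound |sin^{2k} φ · sin 2kφ| ≤ s^{2k+1}.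

Since (sin^N φ · sin Nφ)' = N sin^{N-1} φ · sin (N+1)φ, the extrema of this π-periodic function lie
at the points with (N+1)φ ∈ πℤ, where |sin Nφ| = |sin φ|; its values there are
±|sin (mπ/(N+1))|^{N+1}, and for N + 1 = 2k + 1 odd the largest |sin (mπ/(2k+1))| is s.
As (2k+1)θ₀ ∈ πℤ, the same identity gives |sin ((2k)^j θ₀)| = s for every j, hence
P_n(θ₀) = s^{(2k+1)n}. -/

open Real

theorem abs_sin_le_sin_of_abs_le {x y : ℝ} (hxy : |x| ≤ y) (hy : y ≤ π / 2) :
    |sin x| ≤ sin y := by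
  rw [abs_le] at hxy ⊢
  constructor
  · rw [neg_le, ← sin_neg]
    exact sin_le_sin_of_le_of_le_pi_div_two (by linarith) hy (by linarith)
  · exact sin_le_sin_of_le_of_le_pi_div_two (by linarith) hy hxy.2

theorem abs_sin_int_mul_pi_div_le (k : ℕ) (m : ℤ) :
    |sin (m * π / (2 * k + 1))| ≤ sin (π * k / (2 * k + 1)) := by
  have hc : (0 : ℝ) < 2 * k + 1 := by positivity
  set r := m.bmod (2 * k + 1) with hr
  have hr_le : |(r : ℝ)| ≤ k := by
    have h₁ := Int.le_bmod (x := m) (m := 2 * k + 1) (by omega)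
    have h₂ := Int.bmod_lt (x := m) (m := 2 * k + 1) (by omega)
    exact_mod_cast abs_le.2 ⟨by omega, by omega⟩
  have hm : (m : ℝ) = r + (2 * k + 1) * m.bdiv (2 * k + 1) := by
    rw [hr]
    exact_mod_cast (Int.bmod_add_bdiv m (2 * k + 1)).symm
  rw [hm, show (r + (2 * k + 1) * m.bdiv (2 * k + 1)) * π / (2 * k + 1)
      = r * π / (2 * k + 1) + m.bdiv (2 * k + 1) * π by field_simp,
    sin_add_int_mul_pi, abs_mul, abs_neg_one_zpow, one_mul]
  refine abs_sin_le_sin_of_abs_le ?_ ?_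
  · rw [abs_div, abs_mul, abs_of_pos pi_pos, abs_of_pos hc, mul_comm]
    gcongr
  · rw [div_le_div_iff₀ hc two_pos]
    nlinarith [pi_pos]

theorem abs_sin_mul_eq_abs_sin_of_sin_succ_mul_eq_zero {n : ℕ} {y : ℝ}
    (h : sin ((n + 1) * y) = 0) : |sin (n * y)| = |sin y| := by
  have hsin : sin (n * y) = -(cos ((n + 1) * y) * sin y) := by
    rw [show (n : ℝ) * y = (n + 1) * y - y by ring, sin_sub, h]
    ring
  rcases sin_eq_zero_iff_cos_eq.1 h with hcos | hcos <;> simp [hsin, hcos]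

theorem abs_sin_pow_mul_eq_abs_sin_of_sin_succ_mul_eq_zero {n : ℕ} {y : ℝ}
    (h : sin ((n + 1) * y) = 0) (j : ℕ) : |sin (n ^ j * y)| = |sin y| := by
  induction j with
  | zero => simp
  | succ j ih =>
    obtain ⟨m, hm⟩ := sin_eq_zero_iff.1 h
    have hj : sin ((n + 1) * (n ^ j * y)) = 0 := by
      rw [show (n + 1) * (n ^ j * y) = ((n ^ j * m : ℤ) : ℝ) * π by
        push_cast; rw [mul_assoc, hm]; ring]
      exact sin_int_mul_pi _
    rw [pow_succ', mul_assoc, abs_sin_mul_eq_abs_sin_of_sin_succ_mul_eq_zero hj, ih]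

theorem sin_pi_mul_div_two_mul_add_one_nonneg (k : ℕ) : 0 ≤ sin (π * k / (2 * k + 1)) :=
  sin_nonneg_of_nonneg_of_le_pi (by positivity) <| by
    rw [div_le_iff₀ (by positivity)]; nlinarith [pi_pos]

theorem abs_sin_two_mul_pow_mul_pi_mul_div (k j : ℕ) :
    |sin ((2 * (k : ℝ)) ^ j * (π * k / (2 * k + 1)))| = sin (π * k / (2 * k + 1)) := by
  have h : sin ((2 * k + 1) * (π * k / (2 * k + 1))) = 0 := by
    rw [mul_div_cancel₀ _ (by positivity), mul_comm]
    exact_mod_cast sin_nat_mul_pi k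
  have h_orbit := abs_sin_pow_mul_eq_abs_sin_of_sin_succ_mul_eq_zero (n := 2 * k)
    (by exact_mod_cast h) j
  push_cast at h_orbit
  rw [h_orbit, abs_of_nonneg (sin_pi_mul_div_two_mul_add_one_nonneg k)]

theorem hasDerivAt_sin_pow_mul_sin_mul (n : ℕ) (x : ℝ) :
    HasDerivAt (fun y => sin y ^ n * sin (n * y)) (n * sin x ^ (n - 1) * sin ((n + 1) * x)) x := by
  have h₁ : HasDerivAt (fun y => sin y ^ n) (n * sin x ^ (n - 1) * cos x) x :=
    (hasDerivAt_sin x).pow n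
  refine (h₁.mul (hasDerivAt_const_mul (n : ℝ)).sin).congr_deriv ?_
  rcases n with _ | n
  · simp
  · rw [show ((n + 1 : ℕ) + 1 : ℝ) * x = (n + 1 : ℕ) * x + x by ring, sin_add, pow_succ]
    simp only [add_tsub_cancel_right]
    ring

theorem periodic_sin_pow_mul_sin_mul (n : ℕ) :
    Function.Periodic (fun x => sin x ^ n * sin (n * x)) π := by
  intro x
  dsimp only
  rw [sin_add_pi, mul_add, sin_add_nat_mul_pi, neg_pow, mul_mul_mul_comm, ← mul_pow, neg_one_mul,
    neg_neg, one_pow, one_mul]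

theorem sin_succ_mul_eq_zero_of_isLocalMax {n : ℕ} {x : ℝ}
    (hmax : IsLocalMax (fun y => (sin y ^ n * sin (n * y)) ^ 2) x)
    (hx : sin x ^ n * sin (n * x) ≠ 0) : sin ((n + 1) * x) = 0 := by
  have hn : n ≠ 0 := by rintro rfl; simp at hx
  have hsin : sin x ≠ 0 := fun h => hx (by simp [h, hn])
  have hderiv := hmax.hasDerivAt_eq_zero ((hasDerivAt_sin_pow_mul_sin_mul n x).pow 2)
  simpa [hx, hn, hsin] using hderiv

theorem exists_abs_sin_pow_mul_sin_mul_le (n : ℕ) (φ : ℝ) :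
    ∃ m : ℤ, |sin φ ^ n * sin (n * φ)| ≤ |sin (m * π / (n + 1))| ^ (n + 1) := by
  set g : ℝ → ℝ := fun x => sin x ^ n * sin (n * x) with hg
  obtain ⟨y, hy, hφy⟩ := (periodic_sin_pow_mul_sin_mul n).exists_mem_Ico₀ pi_pos φ
  obtain ⟨x, hx, hmax⟩ := isCompact_Icc.exists_isMaxOn (Set.nonempty_Icc.2 pi_pos.le)
    (show Continuous fun x => g x ^ 2 by fun_prop).continuousOn
  have hφx : |g φ| ≤ |g x| := by
    rw [show g φ = g y from hφy]
    exact sq_le_sq.1 (hmax (Set.Ico_subset_Icc_self hy))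
  by_cases hgx : g x = 0
  · exact ⟨0, hφx.trans (by rw [hgx, abs_zero]; positivity)⟩
  have hx' : x ∈ Set.Ioo 0 π := by
    refine ⟨hx.1.lt_of_ne ?_, hx.2.lt_of_ne ?_⟩ <;> rintro rfl <;> simp [g] at hgx
  have hcrit :=
    sin_succ_mul_eq_zero_of_isLocalMax (hmax.isLocalMax (Icc_mem_nhds hx'.1 hx'.2)) hgx
  obtain ⟨m, hm⟩ := sin_eq_zero_iff.1 hcrit
  refine ⟨m, hφx.trans_eq ?_⟩
  rw [hg, abs_mul, abs_pow, abs_sin_mul_eq_abs_sin_of_sin_succ_mul_eq_zero hcrit, ← pow_succ, hm]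
  field_simp

theorem abs_sin_pow_mul_abs_sin_two_mul_le (k : ℕ) (φ : ℝ) :
    |sin φ| ^ (2 * k) * |sin (2 * k * φ)| ≤ sin (π * k / (2 * k + 1)) ^ (2 * k + 1) := by
  obtain ⟨m, hm⟩ := exists_abs_sin_pow_mul_sin_mul_le (2 * k) φ
  push_cast at hm
  rw [abs_mul, abs_pow] at hm
  exact hm.trans (pow_le_pow_left₀ (abs_nonneg _) (abs_sin_int_mul_pi_div_le k m) _)

theorem pow_mul_prod_Ico_pow_mul_le_pow {R : Type*} [CommSemiring R] [PartialOrder R]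
    [IsOrderedRing R] {a : ℕ → R} {N : ℕ} {c : R} (ha : ∀ j, 0 ≤ a j)
    (h : ∀ j, a j ^ N * a (j + 1) ≤ c) {n : ℕ} (hn : 1 ≤ n) :
    a 0 ^ N * (∏ j ∈ Finset.Ico 1 n, a j ^ (N + 1)) * a n ≤ c ^ n := by
  have hc : 0 ≤ c := (mul_nonneg (pow_nonneg (ha 0) N) (ha 1)).trans (h 0)
  induction n, hn using Nat.le_induction with
  | base => simpa using h 0
  | succ n hn ih =>
    calc a 0 ^ N * (∏ j ∈ Finset.Ico 1 (n + 1), a j ^ (N + 1)) * a (n + 1)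
        = (a 0 ^ N * (∏ j ∈ Finset.Ico 1 n, a j ^ (N + 1)) * a n) * (a n ^ N * a (n + 1)) := by
          rw [Finset.prod_Ico_succ_top hn]; ring
      _ ≤ c ^ n * c :=
          mul_le_mul ih (h n) (mul_nonneg (pow_nonneg (ha n) N) (ha (n + 1))) (pow_nonneg hc n)
      _ = c ^ (n + 1) := (pow_succ c n).symm

theorem pow_mul_prod_Ico_pow_mul_self {M : Type*} [CommMonoid M] (s : M) (N : ℕ) {n : ℕ}
    (hn : 1 ≤ n) : s ^ N * (∏ _j ∈ Finset.Ico 1 n, s ^ (N + 1)) * s = (s ^ (N + 1)) ^ n := by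
  obtain ⟨n, rfl⟩ := Nat.exists_eq_add_of_le' hn
  rw [Finset.prod_const, Nat.card_Ico, add_tsub_cancel_right, pow_succ _ n, pow_succ s N]
  ac_rfl

theorem sine_step_b_general (k n : ℕ) (hn : 1 ≤ n) (θ : ℝ) :
    |Real.sin θ ^ (2 * k) *
        (∏ j ∈ Finset.Ico 1 n, Real.sin ((2 * (k : ℝ)) ^ j * θ) ^ (2 * k + 1)) *
        Real.sin ((2 * (k : ℝ)) ^ n * θ)| ≤
    |Real.sin (π * k / (2 * k + 1)) ^ (2 * k) *
        (∏ j ∈ Finset.Ico 1 n,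
          Real.sin ((2 * (k : ℝ)) ^ j * (π * k / (2 * k + 1))) ^ (2 * k + 1)) *
        Real.sin ((2 * (k : ℝ)) ^ n * (π * k / (2 * k + 1)))| := by
  have hbound := pow_mul_prod_Ico_pow_mul_le_pow (a := fun j => |sin ((2 * (k : ℝ)) ^ j * θ)|)
    (c := sin (π * k / (2 * k + 1)) ^ (2 * k + 1)) (fun _ => abs_nonneg _)
    (fun j => by simpa only [pow_succ', mul_assoc] using abs_sin_pow_mul_abs_sin_two_mul_le k _) hn
  simp only [abs_mul, abs_pow, Finset.abs_prod, abs_sin_two_mul_pow_mul_pi_mul_div,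
    abs_of_nonneg (sin_pi_mul_div_two_mul_add_one_nonneg k), pow_zero, one_mul] at hbound ⊢
  rwa [pow_mul_prod_Ico_pow_mul_self _ _ hn]

theorem sine_step_b (k n : ℕ) (hk : 1 ≤ k) (hn : 1 ≤ n) (θ : ℝ) :
    |Real.sin θ ^ (2 * k) *
        (∏ j ∈ Finset.Ico 1 n, Real.sin ((2 * (k : ℝ)) ^ j * θ) ^ (2 * k + 1)) *
        Real.sin ((2 * (k : ℝ)) ^ n * θ)| ≤
    |Real.sin (π * k / (2 * k + 1)) ^ (2 * k) *
        (∏ j ∈ Finset.Ico 1 n,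
          Real.sin ((2 * (k : ℝ)) ^ j * (π * k / (2 * k + 1))) ^ (2 * k + 1)) *
        Real.sin ((2 * (k : ℝ)) ^ n * (π * k / (2 * k + 1)))| :=
  sine_step_b_general k n hn θ
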